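/- arXiv:1806.07870 — 2 statements merged into one kernel-verified Lean document; each statement's English description precedes it below -/
import Mathlib

section
/- Let Z_w be a chi-square random variable with w degrees of freedom and f(x) = x − 1 − log x. Then Var(f(Z_w/w)) = ψ⁽¹⁾(w/2) − 2/w, where ψ⁽¹⁾ is the trigamma function. -/
open MeasureTheory ProbabilityTheory

/-- The chi-square distribution with `w` degrees of freedom, as a Gamma distribution. -/
noncomputable def chiSqMeasure (w : ℝ) : Measure ℝ := gammaMeasure (w / 2) (1 / 2)

/-- The trigamma function `ψ⁽¹⁾(x) = d²/dx² log Γ(x)`. -/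
noncomputable def trigamma (x : ℝ) : ℝ := deriv (deriv (fun y => Real.log (Real.Gamma y))) x

/-!
For `Z ~ Gamma(a, r)` (here `a = w/2`, `r = 1/2`) every moment `E[Z^j (log Z)^k]` is a ratio of
the integrals `M_k(s) = ∫₀^∞ t^(s-1) (log t)^k e^(-rt) dt` (`logPowExpMellin r k s`), where
`M_0(s) = Γ(s) / r^s` and `M_k' = M_(k+1)` (differentiation of a Mellin transform). Hence
`Var(log Z) = (log M_0)''(a) = ψ⁽¹⁾(a)`, and differentiating `M_0(s+1) = (s/r) M_0(s)` gives
`Cov(Z, log Z) = 1/r`. As `f(Z/w) = Z/w - log Z + const`, its variance is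
`Var(Z)/w² - 2 Cov(Z, log Z)/w + Var(log Z) = 2/w - 4/w + ψ⁽¹⁾(w/2)`.
-/

open Set Filter Asymptotics
open scoped Topology

variable {a r s : ℝ}

/-- Complex-valued, so that Mathlib's Mellin transform calculus applies. -/
noncomputable def logPowExp (r : ℝ) (k : ℕ) (t : ℝ) : ℂ :=
  ((Real.log t ^ k * Real.exp (-(r * t)) : ℝ) : ℂ)

noncomputable def logPowExpMellin (r : ℝ) (k : ℕ) (s : ℝ) : ℝ :=
  ∫ t in Ioi 0, t ^ (s - 1) * (Real.log t ^ k * Real.exp (-(r * t)))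

lemma logPowExp_succ (k : ℕ) :
    logPowExp r (k + 1) = fun t => Real.log t • logPowExp r k t := by
  funext t
  simp only [logPowExp, pow_succ, Complex.real_smul, Complex.ofReal_mul]
  ring

lemma locallyIntegrableOn_logPowExp (k : ℕ) :
    LocallyIntegrableOn (logPowExp r k) (Ioi 0) := by
  refine ContinuousOn.locallyIntegrableOn ?_ measurableSet_Ioi
  refine Complex.continuous_ofReal.comp_continuousOn (ContinuousOn.mul ?_ (by fun_prop))
  exact (Real.continuousOn_log.mono fun t ht => ne_of_gt ht).pow k

lemma logPowExp_isBigO_atTop (hr : 0 < r) (k : ℕ) (b : ℝ) :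
    logPowExp r k =O[atTop] (· ^ (-b)) := by
  induction k generalizing b with
  | zero =>
    rw [← isBigO_norm_left]
    simpa only [logPowExp, Complex.norm_real, Real.norm_eq_abs, pow_zero, one_mul, neg_mul,
      isBigO_abs_left] using (isLittleO_exp_neg_mul_rpow_atTop hr (-b)).isBigO
  | succ k ih => rw [logPowExp_succ]; exact isBigO_rpow_top_log_smul (lt_add_one b) (ih (b + 1))

lemma logPowExp_isBigO_nhdsGT_zero (hr : 0 < r) (k : ℕ) {b : ℝ} (hb : 0 < b) :
    logPowExp r k =O[𝓝[>] 0] (· ^ (-b)) := by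
  induction k generalizing b with
  | zero =>
    refine IsBigO.of_bound 1 ?_
    filter_upwards [Ioo_mem_nhdsGT one_pos] with t ht
    have hexp : Real.exp (-(r * t)) ≤ 1 := Real.exp_le_one_iff.2 (by nlinarith [ht.1])
    have hpow : 1 ≤ t ^ (-b) :=
      Real.one_le_rpow_of_pos_of_le_one_of_nonpos ht.1 ht.2.le (by linarith)
    simpa only [logPowExp, Complex.norm_real, Real.norm_eq_abs, pow_zero, one_mul,
      abs_of_nonneg (Real.exp_nonneg _), abs_of_nonneg (Real.rpow_nonneg ht.1.le _)] using
      hexp.trans hpow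
  | succ k ih =>
    rw [logPowExp_succ]
    simpa using isBigO_rpow_zero_log_smul (half_lt_self hb) (ih (half_pos hb))

lemma cpow_sub_one_smul_ofReal {t : ℝ} (ht : 0 < t) (x : ℝ) :
    (t : ℂ) ^ ((s : ℂ) - 1) • (x : ℂ) = ((t ^ (s - 1) * x : ℝ) : ℂ) := by
  rw [smul_eq_mul, Complex.ofReal_mul, Complex.ofReal_cpow ht.le]
  push_cast; rfl

lemma mellin_logPowExp (k : ℕ) :
    mellin (logPowExp r k) s = logPowExpMellin r k s := by
  unfold mellin logPowExp
  rw [setIntegral_congr_fun measurableSet_Ioi fun t ht => cpow_sub_one_smul_ofReal ht _]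
  exact integral_ofReal

lemma mellinConvergent_logPowExp (hr : 0 < r) (k : ℕ) {s : ℂ} (hs : 0 < s.re) :
    MellinConvergent (logPowExp r k) s :=
  mellinConvergent_of_isBigO_rpow (locallyIntegrableOn_logPowExp k)
    (logPowExp_isBigO_atTop hr k _) (lt_add_one s.re) (logPowExp_isBigO_nhdsGT_zero hr k
      (half_pos hs)) (half_lt_self hs)

lemma integrableOn_logPowExpMellin (hr : 0 < r) (k : ℕ) (hs : 0 < s) :
    IntegrableOn (fun t => t ^ (s - 1) * (Real.log t ^ k * Real.exp (-(r * t)))) (Ioi 0) := by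
  have h : IntegrableOn (fun t : ℝ => RCLike.re ((t : ℂ) ^ ((s : ℂ) - 1) • logPowExp r k t))
      (Ioi 0) := (mellinConvergent_logPowExp hr k (s := s) (by simpa using hs)).re
  refine h.congr_fun (fun t ht => ?_) measurableSet_Ioi
  simp only [logPowExp, cpow_sub_one_smul_ofReal ht, RCLike.re_to_complex, Complex.ofReal_re]

lemma hasDerivAt_logPowExpMellin (hr : 0 < r) (k : ℕ) (hs : 0 < s) :
    HasDerivAt (logPowExpMellin r k) (logPowExpMellin r (k + 1) s) s := by
  have hs' : 0 < (s : ℂ).re := by simpa using hs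
  have h := (mellin_hasDerivAt_of_isBigO_rpow (locallyIntegrableOn_logPowExp k)
    (logPowExp_isBigO_atTop hr k _) (lt_add_one _) (logPowExp_isBigO_nhdsGT_zero hr k
      (half_pos hs')) (half_lt_self hs')).2.real_of_complex
  simpa only [← logPowExp_succ, mellin_logPowExp, Complex.ofReal_re] using h

lemma logPowExpMellin_zero (hr : 0 < r) (hs : 0 < s) :
    logPowExpMellin r 0 s = Real.Gamma s / r ^ s := by
  have h := Real.integral_rpow_mul_exp_neg_mul_Ioi hs hr
  rw [one_div, Real.inv_rpow hr.le, inv_mul_eq_div] at h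
  simpa [logPowExpMellin] using h

lemma logPowExpMellin_zero_pos (hr : 0 < r) (hs : 0 < s) :
    0 < logPowExpMellin r 0 s := by
  rw [logPowExpMellin_zero hr hs]
  have := Real.Gamma_pos_of_pos hs
  positivity

lemma logPowExpMellin_zero_add_one (hr : 0 < r) (hs : 0 < s) :
    logPowExpMellin r 0 (s + 1) = s / r * logPowExpMellin r 0 s := by
  rw [logPowExpMellin_zero hr hs, logPowExpMellin_zero hr (by linarith), Real.Gamma_add_one hs.ne',
    Real.rpow_add_one hr.ne']
  field_simp

lemma logPowExpMellin_one_add_one (hr : 0 < r) (hs : 0 < s) :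
    logPowExpMellin r 1 (s + 1) = (logPowExpMellin r 0 s + s * logPowExpMellin r 1 s) / r := by
  have hshift : HasDerivAt (fun x => logPowExpMellin r 0 (x + 1)) (logPowExpMellin r 1 (s + 1)) s :=
    (hasDerivAt_logPowExpMellin hr 0 (by linarith)).comp_add_const s 1
  have hscale : HasDerivAt (fun x => x / r * logPowExpMellin r 0 x)
      ((logPowExpMellin r 0 s + s * logPowExpMellin r 1 s) / r) s := by
    refine (((hasDerivAt_id' s).div_const r).fun_mul
      (hasDerivAt_logPowExpMellin hr 0 hs)).congr_deriv ?_
    rw [zero_add]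
    ring
  refine hshift.unique (hscale.congr_of_eventuallyEq ?_)
  filter_upwards [Ioi_mem_nhds hs] with x hx
  exact logPowExpMellin_zero_add_one hr hx

lemma hasDerivAt_log_Gamma (hr : 0 < r) (hs : 0 < s) :
    HasDerivAt (fun x => Real.log (Real.Gamma x))
      (logPowExpMellin r 1 s / logPowExpMellin r 0 s + Real.log r) s := by
  have h := ((hasDerivAt_logPowExpMellin hr 0 hs).log (logPowExpMellin_zero_pos hr hs).ne').fun_add
    ((hasDerivAt_id' s).mul_const (Real.log r))
  rw [one_mul, zero_add] at h
  refine h.congr_of_eventuallyEq ?_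
  filter_upwards [Ioi_mem_nhds hs] with x hx
  rw [logPowExpMellin_zero hr hx, Real.log_div (Real.Gamma_pos_of_pos hx).ne'
    (Real.rpow_pos_of_pos hr x).ne', Real.log_rpow hr]
  ring

lemma trigamma_eq_logPowExpMellin (hr : 0 < r) (hs : 0 < s) :
    trigamma s = logPowExpMellin r 2 s / logPowExpMellin r 0 s
      - (logPowExpMellin r 1 s / logPowExpMellin r 0 s) ^ 2 := by
  have hderiv : deriv (fun x => Real.log (Real.Gamma x))
      =ᶠ[𝓝 s] fun x => logPowExpMellin r 1 x / logPowExpMellin r 0 x + Real.log r := by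
    filter_upwards [Ioi_mem_nhds hs] with x hx
    exact (hasDerivAt_log_Gamma hr hx).deriv
  have hM0 := (logPowExpMellin_zero_pos hr hs).ne'
  rw [trigamma, hderiv.deriv_eq]
  refine (((hasDerivAt_logPowExpMellin hr 1 hs).div
    (hasDerivAt_logPowExpMellin hr 0 hs) hM0).add_const _).deriv.trans ?_
  field_simp

lemma toReal_gammaPDF_smul_eq_indicator (ha : 0 < a) (hr : 0 < r) (g : ℝ → ℝ) :
    (fun x => (gammaPDF a r x).toReal • g x) = (Ici 0).indicator
      (fun t => (r ^ a / Real.Gamma a) * (t ^ (a - 1) * Real.exp (-(r * t)) * g t)) := by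
  funext x
  rw [gammaPDF, ENNReal.toReal_ofReal (gammaPDFReal_nonneg ha hr x), smul_eq_mul, gammaPDFReal]
  by_cases hx : 0 ≤ x <;> simp [hx, mul_assoc]

lemma measurable_gammaPDF : Measurable (gammaPDF a r) :=
  (measurable_gammaPDFReal a r).ennreal_ofReal

lemma integral_gammaMeasure (ha : 0 < a) (hr : 0 < r) (g : ℝ → ℝ) :
    ∫ x, g x ∂gammaMeasure a r =
      (∫ t in Ioi 0, t ^ (a - 1) * Real.exp (-(r * t)) * g t) / logPowExpMellin r 0 a := by
  rw [gammaMeasure, integral_withDensity_eq_integral_toReal_smul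
      measurable_gammaPDF (ae_of_all _ fun _ => ENNReal.ofReal_lt_top),
    toReal_gammaPDF_smul_eq_indicator ha hr, integral_indicator measurableSet_Ici,
    integral_Ici_eq_integral_Ioi, integral_const_mul, logPowExpMellin_zero hr ha]
  field_simp

lemma integrable_gammaMeasure_of_integrableOn (ha : 0 < a) (hr : 0 < r) {g : ℝ → ℝ}
    (hg : IntegrableOn (fun t => t ^ (a - 1) * Real.exp (-(r * t)) * g t) (Ioi 0)) :
    Integrable g (gammaMeasure a r) := by
  rw [gammaMeasure, integrable_withDensity_iff_integrable_smul'
      measurable_gammaPDF (ae_of_all _ fun _ => ENNReal.ofReal_lt_top),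
    toReal_gammaPDF_smul_eq_indicator ha hr, integrable_indicator_iff measurableSet_Ici,
    integrableOn_Ici_iff_integrableOn_Ioi]
  exact hg.const_mul _

lemma eqOn_rpow_mul_exp_mul_pow_mul_log_pow (j k : ℕ) :
    EqOn (fun t => t ^ (a - 1) * Real.exp (-(r * t)) * (t ^ j * Real.log t ^ k))
      (fun t => t ^ (a + j - 1) * (Real.log t ^ k * Real.exp (-(r * t)))) (Ioi 0) := by
  intro t ht
  simp only
  rw [add_sub_right_comm, Real.rpow_add_natCast ht.ne']
  ring

lemma integrable_pow_mul_log_pow_gammaMeasure (ha : 0 < a) (hr : 0 < r) (j k : ℕ) :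
    Integrable (fun x => x ^ j * Real.log x ^ k) (gammaMeasure a r) :=
  integrable_gammaMeasure_of_integrableOn ha hr <|
    (integrableOn_logPowExpMellin hr k (by positivity)).congr_fun
      (eqOn_rpow_mul_exp_mul_pow_mul_log_pow j k).symm measurableSet_Ioi

lemma integral_pow_mul_log_pow_gammaMeasure (ha : 0 < a) (hr : 0 < r) (j k : ℕ) :
    ∫ x, x ^ j * Real.log x ^ k ∂gammaMeasure a r =
      logPowExpMellin r k (a + j) / logPowExpMellin r 0 a := by
  rw [integral_gammaMeasure ha hr,
    setIntegral_congr_fun measurableSet_Ioi (eqOn_rpow_mul_exp_mul_pow_mul_log_pow j k)]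
  rfl

lemma integral_id_gammaMeasure (ha : 0 < a) (hr : 0 < r) :
    ∫ x, x ∂gammaMeasure a r = a / r := by
  have h := integral_pow_mul_log_pow_gammaMeasure ha hr 1 0
  simp only [pow_one, pow_zero, mul_one, Nat.cast_one] at h
  rw [h, logPowExpMellin_zero_add_one hr ha]
  field_simp [(logPowExpMellin_zero_pos hr ha).ne']

lemma memLp_id_gammaMeasure (ha : 0 < a) (hr : 0 < r) :
    MemLp (fun x => x) 2 (gammaMeasure a r) :=
  (memLp_two_iff_integrable_sq measurable_id.aestronglyMeasurable).2 <| by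
    simpa using integrable_pow_mul_log_pow_gammaMeasure ha hr 2 0

lemma memLp_log_gammaMeasure (ha : 0 < a) (hr : 0 < r) :
    MemLp Real.log 2 (gammaMeasure a r) :=
  (memLp_two_iff_integrable_sq Real.measurable_log.aestronglyMeasurable).2 <| by
    simpa using integrable_pow_mul_log_pow_gammaMeasure ha hr 0 2

lemma variance_id_gammaMeasure (ha : 0 < a) (hr : 0 < r) :
    Var[fun x => x; gammaMeasure a r] = a / r ^ 2 := by
  have := isProbabilityMeasure_gammaMeasure ha hr
  have h2 := integral_pow_mul_log_pow_gammaMeasure ha hr 2 0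
  simp only [pow_zero, mul_one, Nat.cast_ofNat] at h2
  rw [variance_eq_sub (memLp_id_gammaMeasure ha hr)]
  simp only [Pi.pow_apply]
  rw [h2, integral_id_gammaMeasure ha hr, show a + 2 = a + 1 + 1 by ring,
    logPowExpMellin_zero_add_one hr (by linarith), logPowExpMellin_zero_add_one hr ha]
  field_simp [(logPowExpMellin_zero_pos hr ha).ne']
  ring

lemma covariance_id_log_gammaMeasure (ha : 0 < a) (hr : 0 < r) :
    cov[fun x => x, Real.log; gammaMeasure a r] = 1 / r := by
  have := isProbabilityMeasure_gammaMeasure ha hr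
  have hlog := integral_pow_mul_log_pow_gammaMeasure ha hr 0 1
  have hxlog := integral_pow_mul_log_pow_gammaMeasure ha hr 1 1
  simp only [pow_zero, pow_one, one_mul, Nat.cast_zero, Nat.cast_one, add_zero] at hlog hxlog
  rw [covariance_eq_sub (memLp_id_gammaMeasure ha hr) (memLp_log_gammaMeasure ha hr)]
  simp only [Pi.mul_apply]
  rw [hxlog, hlog, integral_id_gammaMeasure ha hr, logPowExpMellin_one_add_one hr ha]
  field_simp [(logPowExpMellin_zero_pos hr ha).ne']
  ring

lemma variance_log_gammaMeasure (ha : 0 < a) (hr : 0 < r) :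
    Var[Real.log; gammaMeasure a r] = trigamma a := by
  have := isProbabilityMeasure_gammaMeasure ha hr
  have h1 := integral_pow_mul_log_pow_gammaMeasure ha hr 0 1
  have h2 := integral_pow_mul_log_pow_gammaMeasure ha hr 0 2
  simp only [pow_zero, pow_one, one_mul, Nat.cast_zero, add_zero] at h1 h2
  rw [variance_eq_sub (memLp_log_gammaMeasure ha hr), trigamma_eq_logPowExpMellin hr ha]
  simp only [Pi.pow_apply]
  rw [h1, h2]

lemma variance_const_mul_sub_log_gammaMeasure (ha : 0 < a) (hr : 0 < r) (c : ℝ) :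
    Var[fun x => c * x - Real.log x; gammaMeasure a r] =
      c ^ 2 * a / r ^ 2 - 2 * c / r + trigamma a := by
  have := isProbabilityMeasure_gammaMeasure ha hr
  rw [variance_fun_sub ((memLp_id_gammaMeasure ha hr).const_mul c) (memLp_log_gammaMeasure ha hr),
    variance_const_mul, covariance_const_mul_left, variance_id_gammaMeasure ha hr,
    covariance_id_log_gammaMeasure ha hr, variance_log_gammaMeasure ha hr]
  ring

/-- If `Z_w ~ χ²_w` and `f(x) = x − 1 − log x`, then
`Var(f(Z_w/w)) = ψ⁽¹⁾(w/2) − 2/w`. -/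
theorem chiSq_variance_f (w : ℕ) (hw : 0 < w) :
    variance (fun x => x / w - 1 - Real.log (x / w)) (chiSqMeasure w) =
      trigamma (w / 2) - 2 / w := by
  have hw' : (0 : ℝ) < w := by exact_mod_cast hw
  have := isProbabilityMeasure_gammaMeasure (half_pos hw') one_half_pos
  have hae : (fun x => x / w - 1 - Real.log (x / w)) =ᵐ[chiSqMeasure w]
      fun x => (1 / w * x - Real.log x) + (Real.log w - 1) := by
    filter_upwards [(volume.withDensity (gammaPDF (w / 2) (1 / 2))).ae_ne 0] with x hx
    rw [Real.log_div hx hw'.ne']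
    ring
  rw [variance_congr hae, chiSqMeasure, variance_add_const (by fun_prop),
    variance_const_mul_sub_log_gammaMeasure (half_pos hw') one_half_pos]
  field_simp
  ring
end

section
/- For a chi-square random variable Z_w with w degrees of freedom and f(x) = x − 1 − log x, the exponential moment satisfies E[exp((w/4)·f(Z_w/w))] = exp(−w/4 + (w/4)·log w + log Γ(w/4) − log Γ(w/2)). -/
/-!
For `x > 0`, `exp((w/4)·f(x/w)) = e^{-w/4} w^{w/4} · x^{-w/4} e^{x/4}`, so the expectation is a
power–exponential moment of the Gamma(`w/2`, `1/2`) law. Multiplying its density by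
`x^{-w/4} e^{x/4}` gives an unnormalised Gamma(`w/4`, `1/4`) density, whose integral
`4^{w/4} Γ(w/4) = 2^{w/2} Γ(w/4)` cancels the normalising constant `2^{-w/2}/Γ(w/2)` up to
`Γ(w/4)/Γ(w/2)`.
-/

open MeasureTheory ProbabilityTheory

open Real Set

namespace ProbabilityTheory

lemma ae_gammaMeasure_pos (a r : ℝ) : ∀ᵐ x ∂gammaMeasure a r, 0 < x := by
  refine (ae_withDensity_iff (measurable_gammaPDFReal a r).ennreal_ofReal).2 ?_
  filter_upwards [Measure.ae_ne volume 0] with x hx0 hpdf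
  refine lt_of_le_of_ne ?_ hx0.symm
  by_contra hneg
  simp [gammaPDFReal, hneg] at hpdf

lemma integral_gammaMeasure {a r : ℝ} (ha : 0 < a) (hr : 0 < r) (g : ℝ → ℝ) :
    ∫ x, g x ∂gammaMeasure a r =
      ∫ x in Ioi 0, r ^ a / Gamma a * x ^ (a - 1) * exp (-(r * x)) * g x := by
  have hpdf : gammaPDF a r = fun x ↦ ((gammaPDFReal a r x).toNNReal : ENNReal) := rfl
  rw [gammaMeasure, hpdf,
    integral_withDensity_eq_integral_smul (measurable_gammaPDFReal a r).real_toNNReal,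
    ← integral_indicator measurableSet_Ioi]
  refine integral_congr_ae ?_
  filter_upwards [Measure.ae_ne volume 0] with x hx0
  rcases hx0.lt_or_gt with hneg | hpos
  · simp [gammaPDFReal, hneg.not_ge, hneg.not_gt]
  · rw [indicator_of_mem (mem_Ioi.2 hpos), NNReal.smul_def, smul_eq_mul,
      Real.coe_toNNReal _ (gammaPDFReal_nonneg ha hr x), gammaPDFReal, if_pos hpos.le]

lemma integral_rpow_mul_exp_gammaMeasure {a r s t : ℝ} (ha : 0 < a) (hr : 0 < r)
    (has : 0 < a + s) (htr : t < r) :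
    ∫ x, x ^ s * exp (t * x) ∂gammaMeasure a r =
      r ^ a / Gamma a * ((1 / (r - t)) ^ (a + s) * Gamma (a + s)) := by
  rw [integral_gammaMeasure ha hr, ← integral_rpow_mul_exp_neg_mul_Ioi has (sub_pos.2 htr),
    ← integral_const_mul]
  refine setIntegral_congr_fun measurableSet_Ioi fun x (hx : 0 < x) ↦ ?_
  have hpow : x ^ (a - 1) * x ^ s = x ^ (a + s - 1) := by
    rw [← rpow_add hx]; ring_nf
  have hexp : exp (-(r * x)) * exp (t * x) = exp (-((r - t) * x)) := by
    rw [← exp_add]; ring_nf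
  calc r ^ a / Gamma a * x ^ (a - 1) * exp (-(r * x)) * (x ^ s * exp (t * x))
      = r ^ a / Gamma a * ((x ^ (a - 1) * x ^ s) * (exp (-(r * x)) * exp (t * x))) := by ring
    _ = _ := by rw [hpow, hexp]

end ProbabilityTheory

lemma Real.exp_mul_sub_one_sub_log_div {w x : ℝ} (c : ℝ) (hw : 0 < w) (hx : 0 < x) :
    exp (c * (x / w - 1 - log (x / w))) = exp (-c) * w ^ c * (x ^ (-c) * exp (c / w * x)) := by
  rw [rpow_def_of_pos hw, rpow_def_of_pos hx, ← exp_add, ← exp_add, ← exp_add,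
    log_div hx.ne' hw.ne']
  ring_nf

/-- For `Z_w ~ χ²_w` and `f(x) = x − 1 − log x`,
`E[exp((w/4)·f(Z_w/w))] = exp(−w/4 + (w/4)·log w + log Γ(w/4) − log Γ(w/2))`. -/
theorem chiSq_exp_moment_f (w : ℝ) (hw : 0 < w) :
    ∫ x, Real.exp ((w / 4) * (x / w - 1 - Real.log (x / w))) ∂(chiSqMeasure w) =
      Real.exp (-(w / 4) + (w / 4) * Real.log w
        + Real.log (Real.Gamma (w / 4)) - Real.log (Real.Gamma (w / 2))) := by
  have hG2 : 0 < Gamma (w / 2) := Gamma_pos_of_pos (by positivity)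
  have hG4 : 0 < Gamma (w / 4) := Gamma_pos_of_pos (by positivity)
  have hconst : (1 / 2 : ℝ) ^ (w / 2) * 4 ^ (w / 4) = 1 := by
    rw [show (4 : ℝ) ^ (w / 4) = ((2 : ℝ) ^ (2 : ℝ)) ^ (w / 4) by norm_num,
      ← rpow_mul (by norm_num), show 2 * (w / 4) = w / 2 by ring,
      ← mul_rpow (by norm_num) (by norm_num)]
    norm_num
  calc ∫ x, exp (w / 4 * (x / w - 1 - log (x / w))) ∂chiSqMeasure w
      = ∫ x, exp (-(w / 4)) * w ^ (w / 4) * (x ^ (-(w / 4)) * exp (1 / 4 * x))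
          ∂gammaMeasure (w / 2) (1 / 2) := by
        refine integral_congr_ae ?_
        filter_upwards [ae_gammaMeasure_pos (w / 2) (1 / 2)] with x hx
        rw [exp_mul_sub_one_sub_log_div _ hw hx, show w / 4 / w = 1 / 4 by field_simp]
    _ = exp (-(w / 4)) * w ^ (w / 4) * ((1 / 2) ^ (w / 2) / Gamma (w / 2) *
          (4 ^ (w / 4) * Gamma (w / 4))) := by
        rw [integral_const_mul, integral_rpow_mul_exp_gammaMeasure (by positivity) (by norm_num)
          (by linarith) (by norm_num)]
        norm_num [show w / 2 + -(w / 4) = w / 4 by ring]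
    _ = exp (-(w / 4)) * w ^ (w / 4) * Gamma (w / 4) / Gamma (w / 2) := by
        field_simp
        exact hconst
    _ = _ := by
        rw [exp_sub, exp_add, exp_add, exp_log hG4, exp_log hG2, mul_comm (w / 4),
          ← rpow_def_of_pos hw]
end
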